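/- ∂_x^{L-N} [ x^{M-N+1} / (x-1)^{M-N+1} ] = (-1)^{L-N} ((M+L-2N)!/(M-N)!) · x^{M-L+1} (x-1)^{-(M+L-2N+1)} · ₂F₁(-L+N+1, -L+N; -L-M+2N; 1-x), for integers N ≤ L, N ≤ M, and x ∉ {1}. -/

import Mathlib

/-!
By the Leibniz rule, `∂ⁿ[t^p (t-1)^q] = ∑ⱼ C(n,j) (p)↓ⱼ (q)↓ₙ₋ⱼ x^(p-j) (x-1)^(q-n+j)`, with `(·)↓`
the falling factorial. Writing `x^(p-j) = x^(p-n) ((x-1)+1)^(n-j)` and collecting powers of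
`x - 1`, the coefficient of `(x-1)^k` is a Chu–Vandermonde convolution of falling factorials,
which sums to `C(n,k) (q)↓ₙ₋ₖ (p+q-n+k)↓ₖ`. For `p = M-N+1`, `q = -p`, `n = L-N` these are, up to
signs, exactly the terms of `₂F₁(1-n, -n; 1-n-p; 1-x)`.
-/

open scoped BigOperators

/-- The terminating Gauss hypergeometric polynomial `₂F₁(a, b; c; ·)` truncated at
degree `N` (here the series terminates by itself through the Pochhammer symbols),
evaluated at argument `w`. -/
noncomputable def F21termAt (N : ℕ) (a b c w : ℝ) : ℝ :=
  ∑ k ∈ Finset.range (N + 1),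
    (ascPochhammer ℝ k).eval a * (ascPochhammer ℝ k).eval b /
      (ascPochhammer ℝ k).eval c * w ^ k / (Nat.factorial k : ℝ)

open Finset Polynomial

theorem descPochhammer_eval_neg {R : Type*} [CommRing R] (r : R) (k : ℕ) :
    (descPochhammer R k).eval (-r) = (-1) ^ k * (ascPochhammer R k).eval r := by
  rw [← neg_neg r, ascPochhammer_eval_neg_eq_descPochhammer, neg_neg, ← mul_assoc, ← mul_pow]
  simp

theorem ascPochhammer_eval_neg_natCast {R : Type*} [CommRing R] (n k : ℕ) :
    (ascPochhammer R k).eval (-(n : R)) = (-1) ^ k * n.descFactorial k := by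
  rw [ascPochhammer_eval_neg_eq_descPochhammer, descPochhammer_eval_eq_descFactorial]

theorem descPochhammer_eval_add {R : Type*} [CommRing R] (r s : R) (k : ℕ) :
    (descPochhammer R k).eval (r + s) = ∑ ij ∈ antidiagonal k,
      k.choose ij.1 * ((descPochhammer R ij.1).eval r * (descPochhammer R ij.2).eval s) := by
  simp only [← descPochhammer_map (algebraMap ℤ R), eval_map_algebraMap, aeval_eq_smeval]
  exact Ring.descPochhammer_smeval_add k (Commute.all r s)

theorem sum_choose_mul_descPochhammer_eval {R : Type*} [CommRing R] (r s : R) {k n : ℕ}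
    (hk : k ≤ n) :
    ∑ j ∈ range (k + 1), k.choose j *
        ((descPochhammer R j).eval r * (descPochhammer R (n - j)).eval s) =
      (descPochhammer R (n - k)).eval s * (descPochhammer R k).eval (r + (s - (n - k : ℕ))) := by
  have split (j : ℕ) (hj : j ≤ k) : (descPochhammer R (n - j)).eval s =
      (descPochhammer R (n - k)).eval s * (descPochhammer R (k - j)).eval (s - (n - k : ℕ)) := by
    rw [← show n - k + (k - j) = n - j by omega, ← descPochhammer_mul, eval_mul, eval_comp,
      eval_sub, eval_X, eval_natCast]
  rw [descPochhammer_eval_add, Nat.sum_antidiagonal_eq_sum_range_succ_mk, mul_sum]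
  refine sum_congr rfl fun j hj => ?_
  rw [split j (mem_range_succ_iff.mp hj)]
  ring

theorem sum_choose_mul_add_one_pow_mul_pow {R : Type*} [CommSemiring R] (A : ℕ → R) (u : R)
    (n : ℕ) :
    ∑ j ∈ range (n + 1), n.choose j * A j * ((u + 1) ^ (n - j) * u ^ j) =
      ∑ k ∈ range (n + 1), n.choose k * (∑ j ∈ range (k + 1), k.choose j * A j) * u ^ k := by
  have expand (j : ℕ) (hj : j ∈ range (n + 1)) :
      n.choose j * A j * ((u + 1) ^ (n - j) * u ^ j) = ∑ i ∈ range (n + 1 - j),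
        n.choose j * (n - j).choose i * A j * u ^ (i + j) := by
    rw [add_pow, show n - j + 1 = n + 1 - j by have := mem_range_succ_iff.mp hj; omega,
      sum_mul, mul_sum]
    refine sum_congr rfl fun i _ => ?_
    rw [pow_add]
    ring
  rw [sum_congr rfl expand, ← sum_range_diag_flip]
  refine sum_congr rfl fun k _ => ?_
  rw [mul_sum, sum_mul]
  refine sum_congr rfl fun j hj => ?_
  have hjk : j ≤ k := mem_range_succ_iff.mp hj
  rw [Nat.sub_add_cancel hjk, ← mul_assoc, ← Nat.cast_mul, ← Nat.choose_mul hjk]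
  push_cast
  ring

section Derivatives

variable {𝕜 : Type*} [NontriviallyNormedField 𝕜]

theorem iteratedDeriv_zpow_apply (p : ℤ) (k : ℕ) (x : 𝕜) :
    iteratedDeriv k (fun t : 𝕜 => t ^ p) x = (descPochhammer 𝕜 k).eval (p : 𝕜) * x ^ (p - k) := by
  rw [iteratedDeriv_eq_iterate, iter_deriv_zpow, descPochhammer_eval_eq_prod_range]

theorem iteratedDeriv_zpow_mul_sub_zpow [CompleteSpace 𝕜] (p q : ℤ) (n : ℕ) {c x : 𝕜}
    (hx : x ≠ 0) (hxc : x ≠ c) :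
    iteratedDeriv n (fun t => t ^ p * (t - c) ^ q) x = ∑ j ∈ range (n + 1), n.choose j *
      ((descPochhammer 𝕜 j).eval (p : 𝕜) * x ^ (p - j)) *
      ((descPochhammer 𝕜 (n - j)).eval (q : 𝕜) * (x - c) ^ (q - (n - j : ℕ))) := by
  have hf : ContDiffAt 𝕜 n (fun t : 𝕜 => t ^ p) x := (analyticAt_id.zpow hx).contDiffAt
  have hg : ContDiffAt 𝕜 n (fun t : 𝕜 => (t - c) ^ q) x :=
    ((analyticAt_id.sub analyticAt_const).zpow (sub_ne_zero.2 hxc)).contDiffAt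
  rw [iteratedDeriv_fun_mul hf hg]
  simp [iteratedDeriv_zpow_apply, iteratedDeriv_comp_sub_const (f := fun t : 𝕜 => t ^ q)]

theorem iteratedDeriv_zpow_mul_sub_one_zpow [CompleteSpace 𝕜] (p q : ℤ) (n : ℕ) {x : 𝕜}
    (hx0 : x ≠ 0) (hx1 : x ≠ 1) :
    iteratedDeriv n (fun t => t ^ p * (t - 1) ^ q) x = x ^ (p - n) * (x - 1) ^ (q - n) *
      ∑ k ∈ range (n + 1), n.choose k * ((descPochhammer 𝕜 (n - k)).eval (q : 𝕜) *
        (descPochhammer 𝕜 k).eval ((p : 𝕜) + ((q : 𝕜) - (n - k : ℕ)))) * (x - 1) ^ k := by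
  have factor (j : ℕ) (hj : j ∈ range (n + 1)) :
      n.choose j * ((descPochhammer 𝕜 j).eval (p : 𝕜) * x ^ (p - j)) *
        ((descPochhammer 𝕜 (n - j)).eval (q : 𝕜) * (x - 1) ^ (q - (n - j : ℕ))) =
      x ^ (p - n) * (x - 1) ^ (q - n) * (n.choose j *
        ((descPochhammer 𝕜 j).eval (p : 𝕜) * (descPochhammer 𝕜 (n - j)).eval (q : 𝕜)) *
        ((x - 1 + 1) ^ (n - j) * (x - 1) ^ j)) := by
    have hjn : j ≤ n := mem_range_succ_iff.mp hj
    rw [show p - j = p - n + (n - j : ℕ) by push_cast [hjn]; ring,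
      show q - (n - j : ℕ) = q - n + j by push_cast [hjn]; ring,
      zpow_add₀ hx0, zpow_add₀ (sub_ne_zero.2 hx1), zpow_natCast, zpow_natCast, sub_add_cancel]
    ring
  rw [iteratedDeriv_zpow_mul_sub_zpow p q n hx0 hx1, sum_congr rfl factor, ← mul_sum,
    sum_choose_mul_add_one_pow_mul_pow]
  congr 1
  refine sum_congr rfl fun k hk => ?_
  rw [sum_choose_mul_descPochhammer_eval _ _ (mem_range_succ_iff.mp hk)]

end Derivatives

theorem mul_F21termAt_eq_sum_descPochhammer (m n : ℕ) (x : ℝ) :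
    (-1) ^ n * ((m + n).factorial / m.factorial : ℝ) *
      F21termAt n (-(n : ℝ) + 1) (-(n : ℝ)) (-(n : ℝ) - m) (1 - x) =
    ∑ k ∈ range (n + 1), n.choose k * ((descPochhammer ℝ (n - k)).eval (-((m : ℝ) + 1)) *
      (descPochhammer ℝ k).eval (-((n - k : ℕ) : ℝ))) * (x - 1) ^ k := by
  rw [F21termAt, mul_sum]
  refine sum_congr rfl fun k hk => ?_
  replace hk : k ≤ n := mem_range_succ_iff.mp hk
  have hnum : (ascPochhammer ℝ k).eval (-(n : ℝ) + 1) =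
      (-1) ^ k * (ascPochhammer ℝ k).eval ((n - k : ℕ) : ℝ) := by
    rw [show -(n : ℝ) + 1 = -((n : ℝ) - 1) by ring, ascPochhammer_eval_neg_eq_descPochhammer,
      descPochhammer_eval_eq_ascPochhammer]
    push_cast [hk]
    ring_nf
  have hden : (ascPochhammer ℝ k).eval (-(n : ℝ) - m) = (-1) ^ k * (n + m).descFactorial k := by
    rw [← ascPochhammer_eval_neg_natCast]
    push_cast
    ring_nf
  have hfact : ((m + n).factorial : ℝ) = (m + (n - k)).factorial * (n + m).descFactorial k := by
    rw [show m + (n - k) = n + m - k by omega, ← Nat.cast_mul,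
      Nat.factorial_mul_descFactorial (by omega), add_comm]
  have hasc : (m.factorial : ℝ) * (ascPochhammer ℝ (n - k)).eval ((m : ℝ) + 1) =
      (m + (n - k)).factorial := by
    rw [← Nat.factorial_mul_ascFactorial, Nat.cast_mul, ← ascPochhammer_nat_eq_natCast_ascFactorial,
      Nat.cast_add_one]
  have hchoose : (n.descFactorial k : ℝ) = k.factorial * n.choose k := by
    exact_mod_cast Nat.descFactorial_eq_factorial_mul_choose n k
  have hsign : (-1 : ℝ) ^ n = (-1) ^ (n - k) * (-1) ^ k := by
    rw [← pow_add, Nat.sub_add_cancel hk]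
  have hdesc_ne : ((n + m).descFactorial k : ℝ) ≠ 0 := by
    exact_mod_cast (Nat.descFactorial_pos.2 (by omega)).ne'
  -- each Pochhammer symbol at a negative argument, and `(1 - x)^k`, contributes a sign `(-1)^k`
  rw [descPochhammer_eval_neg, descPochhammer_eval_neg, hnum, hden, ascPochhammer_eval_neg_natCast,
    hchoose, hfact, ← hasc, hsign, show (1 - x) = -1 * (x - 1) by ring, mul_pow]
  symm
  field_simp
  rw [← pow_mul, pow_mul', neg_one_sq, one_pow, mul_one]

theorem iteratedDeriv_zpow_mul_sub_one_zpow_neg_eq_F21 (m n : ℕ) {x : ℝ} (hx0 : x ≠ 0)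
    (hx1 : x ≠ 1) :
    iteratedDeriv n (fun t : ℝ => t ^ ((m : ℤ) + 1) * (t - 1) ^ (-((m : ℤ) + 1))) x =
      (-1) ^ n * ((m + n).factorial / m.factorial : ℝ) * x ^ ((m : ℤ) - n + 1) *
        (x - 1) ^ (-((m : ℤ) + n + 1)) *
        F21termAt n (-(n : ℝ) + 1) (-(n : ℝ)) (-(n : ℝ) - m) (1 - x) := by
  rw [iteratedDeriv_zpow_mul_sub_one_zpow _ _ n hx0 hx1, mul_right_comm _ _ (F21termAt _ _ _ _ _),
    mul_right_comm _ _ (F21termAt _ _ _ _ _), mul_F21termAt_eq_sum_descPochhammer]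
  push_cast
  ring_nf

/-- For integers `N ≤ L`, `N ≤ M` and `x ∉ {0,1}`,
`∂_x^{L-N}[x^{M-N+1}/(x-1)^{M-N+1}]
 = (-1)^{L-N}((M+L-2N)!/(M-N)!)·x^{M-L+1}(x-1)^{-(M+L-2N+1)}
   ·₂F₁(-L+N+1, -L+N; -L-M+2N; 1-x)`. -/
theorem iteratedDeriv_formula_D (L M N : ℕ) (hNL : N ≤ L) (hNM : N ≤ M) (x : ℝ)
    (hx0 : x ≠ 0) (hx1 : x ≠ 1) :
    iteratedDeriv (L - N)
        (fun t : ℝ => t ^ ((M : ℤ) - N + 1) * (t - 1) ^ (-((M : ℤ) - N + 1))) x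
      = (-1 : ℝ) ^ (L - N) *
          ((Nat.factorial (M + L - 2 * N) : ℝ) / (Nat.factorial (M - N) : ℝ)) *
          x ^ ((M : ℤ) - L + 1) * (x - 1) ^ (-((M : ℤ) + L - 2 * N + 1)) *
          F21termAt (L - N) (-(L : ℝ) + N + 1) (-(L : ℝ) + N)
            (-(L : ℝ) - M + 2 * N) (1 - x) := by
  obtain ⟨n, rfl⟩ := Nat.exists_eq_add_of_le hNL
  obtain ⟨m, rfl⟩ := Nat.exists_eq_add_of_le hNM
  rw [Nat.add_sub_cancel_left, Nat.add_sub_cancel_left,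
    show N + m + (N + n) - 2 * N = m + n by omega]
  convert iteratedDeriv_zpow_mul_sub_one_zpow_neg_eq_F21 m n hx0 hx1 using 5 <;> push_cast <;> ring
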